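/- Let Q be an NQPR in dimension d ≥ 2. Then for all indices j, k: (1/2)·[λ_max(Q_j)·(‖Q_k‖₁ − 1) − λ_min(Q_j)·(‖Q_k‖₁ + 1)] ≤ ((d−1)/(√2·d))·√((d+1)(d² + d + 2)) − 1/d. Consequently the channel negativity N_C(Q) = max_{j,k} (1/2)·[λ_max(Q_j)·(‖Q_k‖₁ − 1) − λ_min(Q_j)·(‖Q_k‖₁ + 1)] is bounded above by ((d−1)/(√2·d))·√((d+1)(d² + d + 2)) − 1/d. -/

import Mathlib

/-!
Let `μ`, `ν` be the spectra of `Q j`, `Q k`. The NQPR axioms give `∑ μ = 1` and `∑ μ² = ∑ ν² = d`,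
so `‖ν‖₁ ≤ d` by Cauchy–Schwarz. As `λ_max ≥ λ_min`, the left-hand side grows with `‖ν‖₁`, hence is
at most `((d-1)/2) λ_max - ((d+1)/2) λ_min = ∑ c i * μ i` for a vector `c` supported on an argmax
and an argmin of `μ` (distinct, as `μ` is not constant). Because `∑ μ = 1`, both `c` and `μ` may be
centred before applying Cauchy–Schwarz, and the product of the two centred norms is exactly the
square-root term of the bound, while the mean of `c` contributes `-1/d`.
-/

open Finset

namespace Matrix.IsHermitian

variable {𝕜 n : Type*} [RCLike 𝕜] [Fintype n] [DecidableEq n] {A : Matrix n n 𝕜}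

theorem trace_mul_self_eq_sum_sq_eigenvalues (hA : A.IsHermitian) :
    (A * A).trace = ∑ i, (hA.eigenvalues i : 𝕜) ^ 2 := by
  conv_lhs => rw [hA.spectral_theorem, ← map_mul, Unitary.conjStarAlgAut_apply, trace_mul_cycle,
    Unitary.coe_star_mul_self, one_mul, diagonal_mul_diagonal, trace_diagonal]
  simp [sq]

end Matrix.IsHermitian

section

variable {ι : Type*} [Fintype ι]

theorem sum_mul_le_of_sum_eq_one [Nonempty ι] (c μ : ι → ℝ) (hμ : ∑ i, μ i = 1) :
    ∑ i, c i * μ i ≤ (∑ i, c i) / Fintype.card ι +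
      √(∑ i, c i ^ 2 - (∑ i, c i) ^ 2 / Fintype.card ι) * √(∑ i, μ i ^ 2 - 1 / Fintype.card ι) := by
  have hn : (Fintype.card ι : ℝ) ≠ 0 := by positivity
  set c' := (∑ i, c i) / Fintype.card ι
  have hcs :=
    Real.sum_mul_le_sqrt_mul_sqrt univ (fun i => c i - c') (fun i => μ i - 1 / Fintype.card ι)
  have h_inner : ∑ i, (c i - c') * (μ i - 1 / Fintype.card ι) = ∑ i, c i * μ i - c' := by
    simp only [sub_mul, mul_sub, sum_sub_distrib, ← sum_mul, ← mul_sum, hμ, sum_const, card_univ,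
      nsmul_eq_mul, c']
    field_simp
    ring
  have h_var_c : ∑ i, (c i - c') ^ 2 = ∑ i, c i ^ 2 - (∑ i, c i) ^ 2 / Fintype.card ι := by
    simp only [sub_sq, sum_add_distrib, sum_sub_distrib, ← sum_mul, ← mul_sum, sum_const,
      card_univ, nsmul_eq_mul, c']
    field_simp
    ring
  have h_var_μ : ∑ i, (μ i - 1 / Fintype.card ι) ^ 2 = ∑ i, μ i ^ 2 - 1 / Fintype.card ι := by
    simp only [sub_sq, sum_add_distrib, sum_sub_distrib, ← sum_mul, ← mul_sum, hμ, sum_const,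
      card_univ, nsmul_eq_mul]
    field_simp
    ring
  rw [h_inner, h_var_c, h_var_μ] at hcs
  linarith

theorem mul_sub_mul_le_of_sum_eq_one {μ : ι → ℝ} (hμ : ∑ i, μ i = 1) {i j : ι} (hij : i ≠ j)
    (a b : ℝ) :
    a * μ i - b * μ j ≤ (a - b) / Fintype.card ι +
      √(a ^ 2 + b ^ 2 - (a - b) ^ 2 / Fintype.card ι) * √(∑ k, μ k ^ 2 - 1 / Fintype.card ι) := by
  classical
  have : Nonempty ι := ⟨i⟩
  let c : ι → ℝ := fun k => if k = i then a else if k = j then -b else 0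
  have hc : ∀ k, k ≠ i ∧ k ≠ j → c k = 0 := fun k hk => by simp [c, hk.1, hk.2]
  have hcμ : ∑ k, c k * μ k = a * μ i - b * μ j := by
    rw [Fintype.sum_eq_add i j hij fun k hk => by rw [hc k hk, zero_mul]]
    simp only [↓reduceIte, hij.symm, c]
    ring
  have hc1 : ∑ k, c k = a - b := by
    rw [Fintype.sum_eq_add i j hij hc]
    simp only [↓reduceIte, hij.symm, c]
    ring
  have hc2 : ∑ k, c k ^ 2 = a ^ 2 + b ^ 2 := by
    rw [Fintype.sum_eq_add i j hij fun k hk => by rw [hc k hk, sq, zero_mul]]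
    simp [c, hij.symm]
  simpa [hcμ, hc1, hc2] using sum_mul_le_of_sum_eq_one c μ hμ

theorem ciInf_lt_ciSup_of_sum_sq_ne [Nonempty ι] {μ : ι → ℝ}
    (h : ∑ i, μ i ^ 2 ≠ (∑ i, μ i) ^ 2 / Fintype.card ι) : ⨅ i, μ i < ⨆ i, μ i := by
  refine (ciInf_le_ciSup (Set.finite_range μ).bddBelow (Set.finite_range μ).bddAbove).lt_of_ne ?_
  intro hconst
  obtain ⟨m, hμ⟩ : ∃ m, ∀ i, μ i = m := ⟨_, fun i =>
    le_antisymm (le_ciSup (Set.finite_range μ).bddAbove i)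
      (hconst ▸ ciInf_le (Set.finite_range μ).bddBelow i)⟩
  have hn : (Fintype.card ι : ℝ) ≠ 0 := by positivity
  refine h ?_
  simp only [hμ, sum_const, card_univ, nsmul_eq_mul]
  field_simp

end

theorem sqrt_mul_sqrt_eq_channel_bound {d : ℝ} (hd : 1 ≤ d) :
    √(((d - 1) / 2) ^ 2 + ((d + 1) / 2) ^ 2 - ((d - 1) / 2 - (d + 1) / 2) ^ 2 / d) * √(d - 1 / d) =
      (d - 1) / (√2 * d) * √((d + 1) * (d ^ 2 + d + 2)) := by
  have hd0 : 0 < d := by linarith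
  have hinv : 1 / d ≤ 1 := div_le_one_of_le₀ hd hd0.le
  rw [show ((d - 1) / 2 - (d + 1) / 2) ^ 2 = 1 by ring, ← Real.sqrt_mul (by nlinarith)]
  rw [show (d - 1) / (√2 * d) = √((d - 1) ^ 2 / (2 * d ^ 2)) by
    rw [Real.sqrt_div' _ (by positivity), Real.sqrt_sq (by linarith), Real.sqrt_mul (by norm_num),
      Real.sqrt_sq hd0.le], ← Real.sqrt_mul (by positivity)]
  congr 1
  field_simp
  ring

theorem half_iSup_mul_sub_iInf_mul_le {ι : Type*} [Fintype ι] {d : ℕ} (hcard : Fintype.card ι = d)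
    (hd : 2 ≤ d) {μ ν : ι → ℝ} (hμ1 : ∑ i, μ i = 1) (hμ2 : ∑ i, μ i ^ 2 = d)
    (hν2 : ∑ i, ν i ^ 2 = d) :
    (1 / 2 : ℝ) * ((⨆ i, μ i) * ((∑ i, |ν i|) - 1) - (⨅ i, μ i) * ((∑ i, |ν i|) + 1)) ≤
      ((d : ℝ) - 1) / (√2 * d) * √(((d : ℝ) + 1) * ((d : ℝ) ^ 2 + d + 2)) - 1 / d := by
  have hd1 : (1 : ℝ) < d := by exact_mod_cast hd
  have : Nonempty ι := Fintype.card_pos_iff.mp (by omega)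
  obtain ⟨imax, hmax⟩ := exists_eq_ciSup_of_finite (f := μ)
  obtain ⟨imin, hmin⟩ := exists_eq_ciInf_of_finite (f := μ)
  have hne : imax ≠ imin := by
    rintro rfl
    refine (ciInf_lt_ciSup_of_sum_sq_ne ?_).ne (hmin.symm.trans hmax)
    rw [hμ1, hμ2, hcard, one_pow]
    exact ((div_lt_one (by positivity)).2 hd1 |>.trans hd1).ne'
  have hN : ∑ i, |ν i| ≤ d := by
    have hcs := sq_sum_le_card_mul_sum_sq (s := univ) (f := fun i => |ν i|)
    simp only [sq_abs, hν2, card_univ, hcard] at hcs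
    nlinarith [sum_nonneg fun i (_ : i ∈ univ) => abs_nonneg (ν i)]
  have hminmax : μ imin ≤ μ imax := by
    rw [hmin, hmax]
    exact ciInf_le_ciSup (Set.finite_range μ).bddBelow (Set.finite_range μ).bddAbove
  calc (1 / 2 : ℝ) * ((⨆ i, μ i) * ((∑ i, |ν i|) - 1) - (⨅ i, μ i) * ((∑ i, |ν i|) + 1))
      ≤ (d - 1) / 2 * μ imax - (d + 1) / 2 * μ imin := by
        rw [← hmax, ← hmin]
        nlinarith [mul_le_mul_of_nonneg_left hN (sub_nonneg.2 hminmax)]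
    _ ≤ ((d - 1) / 2 - (d + 1) / 2) / d + √(((d - 1) / 2) ^ 2 + ((d + 1) / 2) ^ 2
          - ((d - 1) / 2 - (d + 1) / 2) ^ 2 / d) * √(∑ i, μ i ^ 2 - 1 / d) := by
        simpa only [hcard] using mul_sub_mul_le_of_sum_eq_one hμ1 hne ((d - 1) / 2) ((d + 1) / 2)
    _ = _ := by
        rw [hμ2, sqrt_mul_sqrt_eq_channel_bound hd1.le]
        ring

theorem stmt_15_general (d : ℕ) (hd : 2 ≤ d)
    (Q : Fin (d ^ 2) → Matrix (Fin d) (Fin d) ℂ)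
    (hherm : ∀ j, (Q j).IsHermitian)
    (htr : ∀ j, (Q j).trace = 1)
    (hpair : ∀ j k, (Q j * Q k).trace = if j = k then (d : ℂ) else 0) :
    (∀ j k, (1 / 2 : ℝ) *
        ((⨆ i, (hherm j).eigenvalues i) * ((∑ i, |(hherm k).eigenvalues i|) - 1)
          - (⨅ i, (hherm j).eigenvalues i) * ((∑ i, |(hherm k).eigenvalues i|) + 1)) ≤
      (((d : ℝ) - 1) / (Real.sqrt 2 * d)) *
        Real.sqrt (((d : ℝ) + 1) * ((d : ℝ) ^ 2 + d + 2)) - 1 / d) ∧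
    (⨆ j, ⨆ k, (1 / 2 : ℝ) *
        ((⨆ i, (hherm j).eigenvalues i) * ((∑ i, |(hherm k).eigenvalues i|) - 1)
          - (⨅ i, (hherm j).eigenvalues i) * ((∑ i, |(hherm k).eigenvalues i|) + 1))) ≤
      (((d : ℝ) - 1) / (Real.sqrt 2 * d)) *
        Real.sqrt (((d : ℝ) + 1) * ((d : ℝ) ^ 2 + d + 2)) - 1 / d := by
  have hsum : ∀ j, ∑ i, (hherm j).eigenvalues i = 1 := fun j => by
    apply RCLike.ofReal_injective (K := ℂ)
    rw [RCLike.ofReal_sum, ← (hherm j).trace_eq_sum_eigenvalues, htr, RCLike.ofReal_one]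
  have hsum_sq : ∀ j, ∑ i, (hherm j).eigenvalues i ^ 2 = d := fun j => by
    apply RCLike.ofReal_injective (K := ℂ)
    rw [RCLike.ofReal_natCast, RCLike.ofReal_sum]
    simp_rw [RCLike.ofReal_pow]
    rw [← (hherm j).trace_mul_self_eq_sum_sq_eigenvalues, hpair, if_pos rfl]
  have hbound : ∀ j k, _ := fun j k =>
    half_iSup_mul_sub_iInf_mul_le (Fintype.card_fin d) hd (hsum j) (hsum_sq j) (hsum_sq k)
  have : Nonempty (Fin (d ^ 2)) := ⟨⟨0, by positivity⟩⟩
  exact ⟨hbound, ciSup_le fun j => ciSup_le fun k => hbound j k⟩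

/-- For an NQPR `Q` in dimension `d ≥ 2`, for all `j, k` one has
`(1/2)[λ_max(Q j)(‖Q k‖₁ − 1) − λ_min(Q j)(‖Q k‖₁ + 1)] ≤ ((d−1)/(√2·d))√((d+1)(d²+d+2)) − 1/d`,
and consequently the channel negativity `N_C(Q)` (the maximum of the left-hand side over `j, k`)
is bounded above by the same quantity. -/
theorem stmt_15 (d : ℕ) (hd : 2 ≤ d)
    (Q : Fin (d ^ 2) → Matrix (Fin d) (Fin d) ℂ)
    (hherm : ∀ j, (Q j).IsHermitian)
    (htr : ∀ j, (Q j).trace = 1)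
    (hpair : ∀ j k, (Q j * Q k).trace = if j = k then (d : ℂ) else 0)
    (hsum : ∑ j, Q j = (d : ℂ) • (1 : Matrix (Fin d) (Fin d) ℂ)) :
    (∀ j k, (1 / 2 : ℝ) *
        ((⨆ i, (hherm j).eigenvalues i) * ((∑ i, |(hherm k).eigenvalues i|) - 1)
          - (⨅ i, (hherm j).eigenvalues i) * ((∑ i, |(hherm k).eigenvalues i|) + 1)) ≤
      (((d : ℝ) - 1) / (Real.sqrt 2 * d)) *
        Real.sqrt (((d : ℝ) + 1) * ((d : ℝ) ^ 2 + d + 2)) - 1 / d) ∧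
    (⨆ j, ⨆ k, (1 / 2 : ℝ) *
        ((⨆ i, (hherm j).eigenvalues i) * ((∑ i, |(hherm k).eigenvalues i|) - 1)
          - (⨅ i, (hherm j).eigenvalues i) * ((∑ i, |(hherm k).eigenvalues i|) + 1))) ≤
      (((d : ℝ) - 1) / (Real.sqrt 2 * d)) *
        Real.sqrt (((d : ℝ) + 1) * ((d : ℝ) ^ 2 + d + 2)) - 1 / d :=
  stmt_15_general d hd Q hherm htr hpair
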